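/- arXiv:2505.13262 — 2 statements merged into one kernel-verified Lean document; each statement's English description precedes it below -/
import Mathlib

section
/- Let K be a number field and let h ∈ K[x] be a separable polynomial of degree 4. Then the set {α ∈ K : h(α) is not a square in K} is infinite. -/
/-!
Clear denominators: `D • h = F` with `F ∈ 𝓞_K[X]`, and separability becomes a Bézout relation
`U F + W F' = D²` over `𝓞_K`. A Euclid-type argument, using that the norm of `G(k)` for a
nonconstant `G` is a nonconstant polynomial in `k ∈ ℤ`, gives a prime `𝔭 ∤ D` and `a` with
`F(a) ∈ 𝔭`; then `F'(a) ∉ 𝔭`, so by Taylor expansion `F(a)` or `F(a + π)` has `𝔭`-adic valuation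
exactly `1`, and then so has `F(α + π²β)` for every `β`. Values of odd valuation are not squares.
-/

open Polynomial IsDedekindDomain HeightOneSpectrum NumberField WithZero

theorem Valuation.not_isSquare_of_eq_exp_neg_one {K : Type*} [Field K] (w : Valuation K ℤᵐ⁰)
    {x : K} (hx : w x = exp (-1)) : ¬IsSquare x := by
  rintro ⟨γ, rfl⟩
  rw [map_mul] at hx
  obtain ⟨n, hn⟩ : ∃ n : ℤ, w γ = exp n :=
    ⟨log (w γ), (exp_log fun h0 => by rw [h0, mul_zero] at hx; exact exp_ne_zero hx.symm).symm⟩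
  rw [hn, ← exp_add, exp_inj] at hx
  omega

theorem IsLocalization.exists_smul_mem_lifts_of_finset {R S : Type*} [CommRing R] [CommRing S]
    [Algebra R S] (M : Submonoid R) [IsLocalization M S] (s : Finset S[X]) :
    ∃ b : M, ∀ p ∈ s, (b : R) • p ∈ lifts (algebraMap R S) := by
  classical
  obtain ⟨b, hb⟩ := exist_integer_multiples_of_finset M (s.biUnion coeffs)
  refine ⟨b, fun p hp => (lifts_iff_coeff_lifts _).2 fun n => ?_⟩
  rw [coeff_smul]
  by_cases hn : p.coeff n = 0
  · exact ⟨0, by simp [hn]⟩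
  · exact hb _ (Finset.mem_biUnion.2 ⟨p, hp, coeff_mem_coeffs hn⟩)

theorem Polynomial.Separable.exists_mul_add_mul_derivative_eq_C {R K : Type*} [CommRing R]
    [IsDomain R] [Field K] [Algebra R K] [IsFractionRing R K] {h : K[X]} (hsep : h.Separable) :
    ∃ (D : R) (F U W : R[X]), D ≠ 0 ∧ F.map (algebraMap R K) = D • h ∧
      U * F + W * derivative F = C (D ^ 2) := by
  classical
  obtain ⟨u, w, huw⟩ := hsep
  obtain ⟨b, hb⟩ := IsLocalization.exists_smul_mem_lifts_of_finset (nonZeroDivisors R) {h, u, w}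
  obtain ⟨F, hF⟩ := (mem_lifts _).1 (hb h (by simp))
  obtain ⟨U, hU⟩ := (mem_lifts _).1 (hb u (by simp))
  obtain ⟨W, hW⟩ := (mem_lifts _).1 (hb w (by simp))
  refine ⟨b, F, U, W, nonZeroDivisors.coe_ne_zero b, hF,
    map_injective _ (IsFractionRing.injective R K) ?_⟩
  rw [Polynomial.map_add, Polynomial.map_mul, Polynomial.map_mul, ← derivative_map, hF, hU, hW,
    Polynomial.map_C, derivative_smul]
  simp only [Algebra.smul_def, Polynomial.algebraMap_apply, map_pow]
  linear_combination C (algebraMap R K b) ^ 2 * huw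

theorem Polynomial.eval_derivative_notMem_of_mul_add_mul_eq_C {R : Type*} [CommRing R]
    {P : Ideal R} [hP : P.IsPrime] {F U W : R[X]} {D a : R}
    (hUW : U * F + W * derivative F = C (D ^ 2)) (hD : D ∉ P) (ha : F.eval a ∈ P) :
    (derivative F).eval a ∉ P := by
  intro ha'
  apply hD (hP.mem_of_pow_mem 2 _)
  have := congrArg (eval a) hUW
  rw [eval_add, eval_mul, eval_mul, eval_C] at this
  exact this ▸ add_mem (P.mul_mem_left _ ha) (P.mul_mem_left _ ha')

namespace IsDedekindDomain.HeightOneSpectrum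

variable {R : Type*} [CommRing R] [IsDedekindDomain R] (v : HeightOneSpectrum R)

theorem exists_intValuation_eval_eq_exp_neg_one {F : R[X]} {a : R} (ha : F.eval a ∈ v.asIdeal)
    (ha' : F.derivative.eval a ∉ v.asIdeal) : ∃ α, v.intValuation (F.eval α) = exp (-1) := by
  obtain ⟨π, hπ⟩ := v.intValuation_exists_uniformizer
  have hle : v.intValuation (F.eval a) ≤ exp (-1) := by
    simpa using (v.intValuation_le_pow_iff_mem _ 1).2 (by simpa using ha)
  rcases hle.lt_or_eq with hlt | heq
  · obtain ⟨k, hk⟩ := binomExpansion F a π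
    have hlin : v.intValuation (F.derivative.eval a * π) = exp (-1) := by
      rw [map_mul, intValuation_eq_one_iff.2 ha', hπ, one_mul]
    have hquad : v.intValuation (k * π ^ 2) < exp (-1) :=
      calc v.intValuation (k * π ^ 2) ≤ v.intValuation (π ^ 2) := by
            rw [map_mul]; exact mul_le_of_le_one_left' (v.intValuation_le_one k)
        _ = exp (-2) := by rw [map_pow, hπ, ← exp_nsmul]; rfl
        _ < exp (-1) := by rw [exp_lt_exp]; norm_num
    have hsum : v.intValuation (F.eval a + F.derivative.eval a * π) = exp (-1) := by
      rw [Valuation.map_add_eq_of_lt_right _ (hlin ▸ hlt), hlin]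
    refine ⟨a + π, ?_⟩
    rw [hk, Valuation.map_add_eq_of_lt_left _ (hsum ▸ hquad), hsum]
  · exact ⟨a, heq⟩

theorem intValuation_eval_add_of_mem_sq {F : R[X]} {α t : R}
    (hα : v.intValuation (F.eval α) = exp (-1)) (ht : t ∈ v.asIdeal ^ 2) :
    v.intValuation (F.eval (α + t)) = exp (-1) := by
  have hsq : exp (-2 : ℤ) < v.intValuation (F.eval α) := hα ▸ exp_lt_exp.2 (by norm_num)
  rw [← hα]
  refine Valuation.map_eq_of_sub_lt _ (lt_of_le_of_lt ?_ hsq)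
  refine (v.intValuation_le_pow_iff_mem _ 2).2 (Ideal.mem_of_dvd _ ?_ ht)
  simpa using sub_dvd_eval_sub (α + t) α F

theorem infinite_setOf_intValuation_eval_eq [Infinite R] {F : R[X]} {a : R}
    (ha : F.eval a ∈ v.asIdeal) (ha' : F.derivative.eval a ∉ v.asIdeal) :
    {α : R | v.intValuation (F.eval α) = exp (-1)}.Infinite := by
  obtain ⟨α, hα⟩ := v.exists_intValuation_eval_eq_exp_neg_one ha ha'
  obtain ⟨π, hπ⟩ := v.intValuation_exists_uniformizer
  have hπ0 : π ≠ 0 := fun h0 => by rw [h0, map_zero] at hπ; exact exp_ne_zero hπ.symm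
  refine Set.infinite_of_injective_forall_mem (f := fun β => α + π ^ 2 * β)
    (fun β β' hββ' => mul_left_cancel₀ (pow_ne_zero 2 hπ0) (add_left_cancel hββ')) fun β => ?_
  refine v.intValuation_eval_add_of_mem_sq hα (Ideal.mul_mem_right _ _ (Ideal.pow_mem_pow ?_ 2))
  rw [← intValuation_lt_one_iff_mem, hπ, ← exp_zero, exp_lt_exp]
  norm_num

theorem valuation_eval_algebraMap_eq {K : Type*} [Field K] [Algebra R K] [IsFractionRing R K]
    {F : R[X]} {h : K[X]} {D : R} (hF : F.map (algebraMap R K) = D • h) (hD : D ∉ v.asIdeal)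
    (α : R) : v.valuation K (h.eval (algebraMap R K α)) = v.intValuation (F.eval α) := by
  have hFα : algebraMap R K (F.eval α) = algebraMap R K D * h.eval (algebraMap R K α) := by
    rw [← eval₂_at_apply, ← eval_map, hF, eval_smul, Algebra.smul_def]
  have hval : ∀ r : R, v.valuation K (algebraMap R K r) = v.intValuation r :=
    v.valuation_of_algebraMap
  rw [← hval, hFα, map_mul, hval, intValuation_eq_one_iff.2 hD, one_mul]

end IsDedekindDomain.HeightOneSpectrum

namespace NumberField.RingOfIntegers

variable {K : Type*} [Field K] [NumberField K]

theorem finite_setOf_norm_eval_intCast_eq {G : (𝓞 K)[X]} (hG : 0 < G.natDegree) (n : ℤ) :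
    {k : ℤ | Algebra.norm ℤ (G.eval (k : 𝓞 K)) = n}.Finite := by
  let GK := G.map (algebraMap (𝓞 K) K)
  let Q : ℂ[X] := ∏ σ : K →ₐ[ℚ] ℂ, GK.map (σ : K →+* ℂ)
  have hQ : ∀ k : ℤ, Q.eval (k : ℂ) = Algebra.norm ℤ (G.eval (k : 𝓞 K)) := by
    intro k
    have hσ : ∀ σ : K →ₐ[ℚ] ℂ,
        (GK.map (σ : K →+* ℂ)).eval (k : ℂ) = σ ((G.eval (k : 𝓞 K) : 𝓞 K) : K) := by
      intro σ
      rw [← map_intCast (σ : K →+* ℂ) k, eval_map, eval₂_at_apply, eval_map,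
        ← map_intCast (algebraMap (𝓞 K) K) k, eval₂_at_apply]
      rfl
    have hnorm := Algebra.norm_eq_prod_embeddings ℚ ℂ ((G.eval (k : 𝓞 K) : 𝓞 K) : K)
    rw [← Algebra.coe_norm_int] at hnorm
    rw [eval_prod, Finset.prod_congr rfl fun σ _ => hσ σ, ← hnorm]
    simp
  have hGK : GK.natDegree = G.natDegree :=
    natDegree_map_eq_of_injective (IsFractionRing.injective (𝓞 K) K) G
  have hQdeg : Q.natDegree = Module.finrank ℚ K * G.natDegree := by
    rw [natDegree_prod _ _ fun σ _ => (Polynomial.map_ne_zero_iff (RingHom.injective _)).2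
      (ne_zero_of_natDegree_gt (hGK ▸ hG))]
    rw [Finset.sum_congr rfl fun (σ : K →ₐ[ℚ] ℂ) _ =>
      natDegree_map_eq_of_injective (RingHom.injective (σ : K →+* ℂ)) GK]
    simp [hGK, AlgHom.card]
  have hQn : Q - C (n : ℂ) ≠ 0 := by
    refine ne_zero_of_natDegree_gt (n := 0) ?_
    rw [natDegree_sub_C, hQdeg]
    exact Nat.mul_pos Module.finrank_pos hG
  refine (((Q - C (n : ℂ)).finite_setOfPred_isRoot hQn).preimage
    Int.cast_injective.injOn).subset fun k hk => ?_
  simp_all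

theorem exists_not_associated_eval_intCast {G : (𝓞 K)[X]} (hG : 0 < G.natDegree) (c : 𝓞 K) :
    ∃ k : ℤ, ¬Associated (G.eval (k : 𝓞 K)) c := by
  by_contra! hassoc
  refine Set.infinite_univ (((finite_setOf_norm_eval_intCast_eq hG (Algebra.norm ℤ c)).union
    (finite_setOf_norm_eval_intCast_eq hG (-Algebra.norm ℤ c))).subset fun k _ => ?_)
  have := congrArg Ideal.absNorm (Ideal.span_singleton_eq_span_singleton.2 (hassoc k))
  rw [Ideal.absNorm_span_singleton, Ideal.absNorm_span_singleton] at this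
  exact Int.natAbs_eq_natAbs_iff.1 this

theorem exists_heightOneSpectrum_notMem_and_eval_mem {F : (𝓞 K)[X]} (hF : 0 < F.natDegree)
    {D : 𝓞 K} (hD : D ≠ 0) :
    ∃ v : HeightOneSpectrum (𝓞 K), D ∉ v.asIdeal ∧ ∃ a, F.eval a ∈ v.asIdeal := by
  obtain ⟨b, hb⟩ : ∃ b, F.eval b ≠ 0 := by
    by_contra! h0
    exact ne_zero_of_natDegree_gt hF (Polynomial.funext fun r => by simp [h0])
  set c := F.eval b
  let G := F.comp (C b + C (c * D) * X)
  have hG : G.natDegree = F.natDegree := by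
    rw [natDegree_comp, natDegree_C_add, natDegree_C_mul_X _ (mul_ne_zero hb hD), mul_one]
  obtain ⟨k, hk⟩ := exists_not_associated_eval_intCast (hG ▸ hF) c
  -- Euclid's trick: `F(b + cDk) = c z` with `z ≡ 1 mod D`, so a prime containing `z` avoids `D`.
  obtain ⟨y, hy⟩ : c * D * k ∣ F.eval (b + c * D * k) - c := by
    simpa using sub_dvd_eval_sub (b + c * D * k) b F
  set z := 1 + D * k * y
  have hFz : F.eval (b + c * D * k) = c * z := by linear_combination hy
  have hz : ¬IsUnit z := fun hu => hk (by simpa [G, hFz] using associated_mul_unit_left c z hu)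
  obtain ⟨P, hP, hzP⟩ := Ideal.exists_le_maximal _ (Ideal.span_singleton_eq_top.not.2 hz)
  have hzP' : z ∈ P := hzP (Ideal.mem_span_singleton_self z)
  refine ⟨⟨P, hP.isPrime, Ring.ne_bot_of_isMaximal_of_not_isField hP (not_isField K)⟩,
    fun hDP => hP.ne_top ((Ideal.eq_top_iff_one _).2 ?_), b + c * D * k, ?_⟩
  · simpa [z] using P.sub_mem hzP' (P.mul_mem_right y (P.mul_mem_right (k : 𝓞 K) hDP))
  · rw [hFz]
    exact P.mul_mem_left c hzP'

end NumberField.RingOfIntegers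

/-- Let `K` be a number field and `h ∈ K[x]` a separable polynomial of
degree 4.  Then there are infinitely many `α ∈ K` for which `h(α)` is not a square in `K`. -/
theorem quartic_nonsquare_values_infinite
    (K : Type) [Field K] [NumberField K]
    (h : Polynomial K) (hsep : h.Separable) (hdeg : h.degree = 4) :
    {α : K | ¬ IsSquare (h.eval α)}.Infinite := by
  obtain ⟨D, F, U, W, hD, hF, hUW⟩ := hsep.exists_mul_add_mul_derivative_eq_C (R := 𝓞 K)
  have hFdeg : 0 < F.natDegree := by
    rw [← natDegree_map_eq_of_injective (IsFractionRing.injective (𝓞 K) K), hF,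
      ← algebraMap_smul K D h, smul_eq_C_mul, natDegree_C_mul (by simpa using hD),
      natDegree_eq_of_degree_eq_some hdeg]
    norm_num
  obtain ⟨v, hDv, a, ha⟩ := RingOfIntegers.exists_heightOneSpectrum_notMem_and_eval_mem hFdeg hD
  have hF' := eval_derivative_notMem_of_mul_add_mul_eq_C hUW hDv ha
  refine ((v.infinite_setOf_intValuation_eval_eq ha hF').image
    (IsFractionRing.injective (𝓞 K) K).injOn).mono ?_
  rintro _ ⟨α, hα, rfl⟩
  exact (v.valuation K).not_isSquare_of_eq_exp_neg_one
    ((v.valuation_eval_algebraMap_eq hF hDv α).trans hα)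
end

section
/- Let p be a prime number and let F ∈ ℤ[x,y,z] be homogeneous of degree d ≥ 1. Suppose the reduction F̄ of F modulo p defines a smooth plane curve over 𝔽_p, i.e., there is no point (a,b,c) ≠ (0,0,0) with coordinates in an algebraic closure of 𝔽_p at which F̄ and all three partial derivatives of F̄ vanish. Then F, regarded as a polynomial over ℚ, also defines a smooth plane curve: there is no point (a,b,c) ≠ (0,0,0) with coordinates in an algebraic closure of ℚ at which F and all three partial derivatives of F vanish. -/
/-!
Choose a valuation ring `A` of `ℚ̄` in which `p` is not a unit. A nonzero point of `ℚ̄³` can be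
rescaled into `A³` with one coordinate equal to `1`; as `F` and its partial derivatives are
homogeneous, the rescaled point is still a common zero of them. The residue field of `A` has
characteristic `p` and is algebraic over `𝔽_p`, so it embeds into `𝔽̄_p`, and the image of the
rescaled point there is a nonzero common zero of `F̄` and its partial derivatives.
-/

namespace MvPolynomial

theorem IsHomogeneous.aeval_smul {σ R S : Type*} [CommSemiring R] [CommSemiring S] [Algebra R S]
    {φ : MvPolynomial σ R} {n : ℕ} (hφ : φ.IsHomogeneous n) (t : S) (x : σ → S) :
    MvPolynomial.aeval (t • x) φ = t ^ n * MvPolynomial.aeval x φ := by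
  rw [aeval_def, aeval_def, eval₂_eq, eval₂_eq, Finset.mul_sum]
  refine Finset.sum_congr rfl fun d hd => ?_
  have hdeg : ∑ i ∈ d.support, d i = n := by
    rw [← Finsupp.degree_apply, Finsupp.degree_eq_weight_one]
    exact hφ (mem_support_iff.mp hd)
  simp only [Pi.smul_apply, smul_eq_mul, mul_pow, Finset.prod_mul_distrib,
    Finset.prod_pow_eq_pow_sum, hdeg]
  ring

theorem aeval_map_intCastRingHom {σ R S : Type*} [CommRing R] [CommRing S] [Algebra R S]
    (x : σ → S) (F : MvPolynomial σ ℤ) : aeval x (map (Int.castRingHom R) F) = aeval x F := by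
  rw [← algebraMap_int_eq, aeval_map_algebraMap]

end MvPolynomial

theorem Polynomial.IsPrimitive.map_intCastRingHom_ne_zero {q : Polynomial ℤ} (hq : q.IsPrimitive)
    (p : ℕ) [hp : Fact p.Prime] : q.map (Int.castRingHom (ZMod p)) ≠ 0 := by
  intro h
  refine (Nat.prime_iff_prime_int.mp hp.out).not_isUnit
    (hq _ ((C_dvd_iff_dvd_coeff _ _).mpr fun i => ?_))
  rw [← ZMod.intCast_zmod_eq_zero_iff_dvd]
  simpa using congr_arg (coeff · i) h

theorem IsAlgebraic.map_ringHom_zmod {R k : Type*} [CommRing R] [IsDomain R]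
    [Module.IsTorsionFree ℤ R] [CommRing k] (p : ℕ) [Fact p.Prime] [Algebra (ZMod p) k]
    (f : R →+* k) {y : R} (hy : IsAlgebraic ℤ y) : IsAlgebraic (ZMod p) (f y) := by
  obtain ⟨q, hq0, hqy⟩ := hy
  refine ⟨_, q.isPrimitive_primPart.map_intCastRingHom_ne_zero p, ?_⟩
  rw [← algebraMap_int_eq, Polynomial.aeval_map_algebraMap]
  exact (Polynomial.aeval_algHom_apply f.toIntAlgHom y _).trans
    (by rw [Polynomial.aeval_primPart_eq_zero hq0 hqy, map_zero])

theorem exists_valuationSubring_not_isUnit_natCast (K : Type*) [Field K] [CharZero K]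
    (p : ℕ) [hp : Fact p.Prime] : ∃ A : ValuationSubring K, ¬ IsUnit (p : A) := by
  let P : Ideal ℤ := Ideal.span {(p : ℤ)}
  have : P.IsPrime := (Ideal.span_singleton_prime (by exact_mod_cast hp.out.ne_zero)).mpr
    (Nat.prime_iff_prime_int.mp hp.out)
  have hunit : ∀ y : P.primeCompl, IsUnit (Int.castRingHom K y) := fun y =>
    isUnit_iff_ne_zero.mpr (Int.cast_ne_zero.mpr fun h => y.2 (h ▸ P.zero_mem))
  obtain ⟨A, hA, hlocal⟩ := IsLocalRing.exists_factor_valuationRing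
    (IsLocalization.lift (M := P.primeCompl) (S := Localization.AtPrime P) hunit)
  refine ⟨A, fun hpA => ?_⟩
  have := hlocal.map_nonunit (p : Localization.AtPrime P) (by simpa using hpA)
  rw [← map_natCast (algebraMap ℤ _), IsLocalization.AtPrime.isUnit_to_map_iff _ P] at this
  exact this (Ideal.subset_span rfl)

theorem IsLocalRing.charP_residueField_of_not_isUnit {A : Type*} [CommRing A] [IsLocalRing A]
    {p : ℕ} (hp : p.Prime) (h : ¬ IsUnit (p : A)) : CharP (ResidueField A) p :=
  (CharP.charP_iff_prime_eq_zero hp).mpr <| by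
    rwa [← map_natCast (residue A), residue_eq_zero_iff]

namespace ValuationSubring

variable {K : Type*} [Field K] (A : ValuationSubring K)

theorem nonempty_ringHom_algebraicClosure_zmod [CharZero K] [hK : Algebra.IsAlgebraic ℤ K]
    (p : ℕ) [hp : Fact p.Prime] (hpA : ¬ IsUnit (p : A)) :
    Nonempty (A →+* AlgebraicClosure (ZMod p)) := by
  have := IsLocalRing.charP_residueField_of_not_isUnit hp.out hpA
  let := ZMod.algebra (IsLocalRing.ResidueField A) p
  have : Algebra.IsAlgebraic (ZMod p) (IsLocalRing.ResidueField A) := ⟨fun x => by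
    obtain ⟨y, rfl⟩ := IsLocalRing.residue_surjective x
    refine IsAlgebraic.map_ringHom_zmod p (IsLocalRing.residue A) ?_
    exact (isAlgebraic_algHom_iff A.subtype.toIntAlgHom Subtype.val_injective).mp
      (Algebra.IsAlgebraic.isAlgebraic _)⟩
  exact ⟨(IsAlgClosed.lift : IsLocalRing.ResidueField A →ₐ[ZMod p] _).toRingHom.comp
    (IsLocalRing.residue A)⟩

variable {σ : Type*} [Finite σ]

theorem exists_mul_mem_eq_one {a : σ → K} (ha : a ≠ 0) :
    ∃ t : K, (∀ j, t * a j ∈ A) ∧ ∃ i, t * a i = 1 := by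
  obtain ⟨j, hj⟩ := Function.ne_iff.mp ha
  have : Nonempty σ := ⟨j⟩
  obtain ⟨i, hi⟩ := Finite.exists_max fun j => A.valuation (a j)
  have hai : a i ≠ 0 := fun h =>
    hj (A.valuation.zero_iff.mp (le_antisymm (by simpa [h] using hi j) zero_le))
  refine ⟨(a i)⁻¹, fun j => ?_, i, inv_mul_cancel₀ hai⟩
  rw [← A.valuation_le_one_iff, map_mul, map_inv₀,
    inv_mul_le_one₀ (A.valuation.pos_iff.mpr hai)]
  exact hi j

theorem exists_ne_zero_aeval_eq_zero_of_isHomogeneous {L : Type*} [CommRing L] [Nontrivial L]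
    (ρ : A →+* L) {a : σ → K} (ha : a ≠ 0) :
    ∃ b : σ → L, b ≠ 0 ∧ ∀ (G : MvPolynomial σ ℤ) (m : ℕ), G.IsHomogeneous m →
      MvPolynomial.aeval a G = 0 → MvPolynomial.aeval b G = 0 := by
  obtain ⟨t, htA, i, hti⟩ := A.exists_mul_mem_eq_one ha
  let c : σ → A := fun j => ⟨t * a j, htA j⟩
  have hci : c i = 1 := Subtype.ext hti
  refine ⟨fun j => ρ (c j), Function.ne_iff.mpr ⟨i, by simp [hci]⟩, fun G m hG hGa => ?_⟩
  have hc : MvPolynomial.aeval c G = 0 := Subtype.val_injective <| by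
    calc (MvPolynomial.aeval c G : K)
        = MvPolynomial.aeval (t • a) G := MvPolynomial.comp_aeval_apply c A.subtype.toIntAlgHom G
      _ = 0 := by rw [hG.aeval_smul, hGa, mul_zero]
  exact (MvPolynomial.comp_aeval_apply c ρ.toIntAlgHom G).symm.trans (by rw [hc, map_zero])

end ValuationSubring

theorem smooth_of_smooth_reduction_general
    (p : ℕ) [Fact p.Prime] (d : ℕ)
    (F : MvPolynomial (Fin 3) ℤ) (hF : F.IsHomogeneous d)
    (hsmooth : ¬ ∃ a : Fin 3 → AlgebraicClosure (ZMod p), a ≠ 0 ∧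
      MvPolynomial.aeval a (MvPolynomial.map (Int.castRingHom (ZMod p)) F) = 0 ∧
      ∀ i : Fin 3, MvPolynomial.aeval a
        (MvPolynomial.pderiv i (MvPolynomial.map (Int.castRingHom (ZMod p)) F)) = 0) :
    ¬ ∃ a : Fin 3 → AlgebraicClosure ℚ, a ≠ 0 ∧
      MvPolynomial.aeval a (MvPolynomial.map (Int.castRingHom ℚ) F) = 0 ∧
      ∀ i : Fin 3, MvPolynomial.aeval a
        (MvPolynomial.pderiv i (MvPolynomial.map (Int.castRingHom ℚ) F)) = 0 := by
  rintro ⟨a, ha, hFa, hDa⟩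
  simp only [MvPolynomial.pderiv_map, MvPolynomial.aeval_map_intCastRingHom] at hFa hDa hsmooth
  obtain ⟨A, hpA⟩ := exists_valuationSubring_not_isUnit_natCast (AlgebraicClosure ℚ) p
  -- `hK` is passed by name: instance search finds a `ℤ`-algebra structure on `AlgebraicClosure ℚ`
  -- that is not reducibly equal to the one in the lemma.
  obtain ⟨ρ⟩ := A.nonempty_ringHom_algebraicClosure_zmod p hpA
    (hK := IsFractionRing.comap_isAlgebraic_iff.mpr (AlgebraicClosure.isAlgebraic ℚ))
  obtain ⟨b, hb, hspec⟩ := A.exists_ne_zero_aeval_eq_zero_of_isHomogeneous ρ ha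
  exact hsmooth ⟨b, hb, hspec F d hF hFa, fun i => hspec _ _ hF.pderiv (hDa i)⟩

/-- Let `p` be a prime and `F ∈ ℤ[x,y,z]` homogeneous of degree `d ≥ 1`.
If the reduction of `F` modulo `p` defines a smooth plane curve over `𝔽_p` (no nonzero
common zero of it and its partial derivatives in an algebraic closure of `𝔽_p`), then `F`,
regarded over `ℚ`, also defines a smooth plane curve. -/
theorem smooth_of_smooth_reduction
    (p : ℕ) [Fact p.Prime] (d : ℕ) (hd : 1 ≤ d)
    (F : MvPolynomial (Fin 3) ℤ) (hF : F.IsHomogeneous d)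
    (hsmooth : ¬ ∃ a : Fin 3 → AlgebraicClosure (ZMod p), a ≠ 0 ∧
      MvPolynomial.aeval a (MvPolynomial.map (Int.castRingHom (ZMod p)) F) = 0 ∧
      ∀ i : Fin 3, MvPolynomial.aeval a
        (MvPolynomial.pderiv i (MvPolynomial.map (Int.castRingHom (ZMod p)) F)) = 0) :
    ¬ ∃ a : Fin 3 → AlgebraicClosure ℚ, a ≠ 0 ∧
      MvPolynomial.aeval a (MvPolynomial.map (Int.castRingHom ℚ) F) = 0 ∧
      ∀ i : Fin 3, MvPolynomial.aeval a
        (MvPolynomial.pderiv i (MvPolynomial.map (Int.castRingHom ℚ) F)) = 0 :=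
  smooth_of_smooth_reduction_general p d F hF hsmooth
end
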